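/- arXiv:1907.13402 — 2 statements merged into one kernel-verified Lean document; each statement's English description precedes it below -/
import Mathlib

section
/- Let X be a real Hilbert space, B a nonempty closed convex subset of X, A a body in X (a closed convex set with nonempty interior), and y ∈ ∂A an LUR point of A. Let {A_n} and {B_n} be sequences of nonempty closed convex subsets of X such that A_n → A and B_n → B in the Attouch-Wets sense, and suppose A ∩ B = {y}. Then for every starting point a₀ ∈ X, the perturbed alternating projections sequences {a_n} and {b_n} (w.r.t. {A_n} and {B_n}, with starting point a₀) converge in norm to y. -/
open Filter Metric Topology

/-- Attouch–Wets convergence of a sequence of sets: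
for every `N`, `sup_{‖x‖ ≤ N} |dist(x, Aₙ) − dist(x, L)| → 0`. -/
def AWTendsto {X : Type*} [NormedAddCommGroup X] (A : ℕ → Set X) (L : Set X) : Prop :=
  ∀ N : ℕ, ∀ ε : ℝ, 0 < ε → ∃ n₀ : ℕ, ∀ n ≥ n₀, ∀ x : X, ‖x‖ ≤ (N : ℝ) →
    |Metric.infDist x (A n) - Metric.infDist x L| < ε

/-- `p` is a metric projection (nearest point) of `x` onto `K`. -/
def IsProjOn {X : Type*} [NormedAddCommGroup X] (K : Set X) (x p : X) : Prop :=
  p ∈ K ∧ ∀ y ∈ K, dist x p ≤ dist x y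

/-- `a`, `b` are the perturbed alternating projections sequences w.r.t. `A`, `B`
with starting point `a₀`: `bₙ = P_{Bₙ}(a_{n−1})` and `aₙ = P_{Aₙ}(bₙ)` for `n ≥ 1`. -/
def IsPerturbedAPS {X : Type*} [NormedAddCommGroup X]
    (A B : ℕ → Set X) (a₀ : X) (a b : ℕ → X) : Prop :=
  a 0 = a₀ ∧ ∀ n : ℕ,
    IsProjOn (B (n + 1)) (a n) (b (n + 1)) ∧ IsProjOn (A (n + 1)) (b (n + 1)) (a (n + 1))

/-- `x` is an LUR (locally uniformly rotund) point of the body `A`: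
for each `ε > 0` there is `δ > 0` such that `y ∈ A` and
`dist((x+y)/2, ∂A) < δ` imply `‖x − y‖ < ε`. -/
def IsLURPoint {X : Type*} [NormedAddCommGroup X] [NormedSpace ℝ X]
    (A : Set X) (x : X) : Prop :=
  ∀ ε : ℝ, 0 < ε → ∃ δ : ℝ, 0 < δ ∧ ∀ y ∈ A,
    Metric.infDist ((2 : ℝ)⁻¹ • (x + y)) (frontier A) < δ → ‖x - y‖ < ε

/-!
Separate `interior A` from `B` by a unit vector `w`. Since `y` is an LUR point, `w` strongly
exposes `A` at `y`, while `B` lies in the half-space `⟪w, ·⟫ ≥ ⟪w, y⟫`. Near `y`, Attouch–Wets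
convergence provides points of `Aₙ` and `Bₙ` within `η` of `y`, and the projection inequality
turns one round of projections into a perturbed Fejér estimate
`‖aₙ₊₁ - y‖² + ‖bₙ₊₁ - aₙ₊₁‖² ≤ (‖aₙ - y‖ + 4η)²`.

Away from `y`, convexity spreads the strict separation of `A` into a cone: `Aₙ` eventually lies
below a hyperplane through `y` tilted downwards, `Bₙ` above one tilted much less. A far `aₙ₊₁`
would then need a last step `bₙ₊₁ → aₙ₊₁` proportional to its distance from `y`, which the Fejér
estimate forbids; so the sequence is bounded. Once it is bounded, take `η` small: either the last
step is long and `‖aₙ - y‖²` drops by a fixed amount, or `aₙ₊₁` is almost a common point of `A`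
and `B`, hence close to `y` by strong exposure.
-/

open RealInnerProductSpace

theorem exists_eventually_le_of_eventually_le_max {x : ℕ → ℝ} {T : ℝ}
    (h : ∀ᶠ n in atTop, x (n + 1) ≤ max (x n) T) : ∃ R, ∀ᶠ n in atTop, x n ≤ R := by
  obtain ⟨n₀, hn₀⟩ := eventually_atTop.mp h
  refine ⟨max (x n₀) T, eventually_atTop.mpr ⟨n₀, fun n hn => ?_⟩⟩
  induction n, hn using Nat.le_induction with
  | base => exact le_max_left _ _
  | succ n hn ih => exact (hn₀ n hn).trans (max_le ih (le_max_right _ _))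

theorem eventually_le_of_eventually_sq_le_sub_or_le {x : ℕ → ℝ} (hx : ∀ n, 0 ≤ x n) {E c : ℝ}
    (hE : 0 < E) (h : ∀ᶠ n in atTop, x (n + 1) ^ 2 ≤ x n ^ 2 - E ∨ x (n + 1) ≤ c) :
    ∀ᶠ n in atTop, x n ≤ c := by
  obtain ⟨n₀, hn₀⟩ := eventually_atTop.mp h
  obtain ⟨m, hm, hmc⟩ : ∃ m ≥ n₀, x m ≤ c := by
    by_contra! hbig
    have hdesc : ∀ k : ℕ, x (n₀ + k) ^ 2 ≤ x n₀ ^ 2 - k * E := by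
      intro k
      induction k with
      | zero => simp
      | succ k ih =>
        have := (hn₀ (n₀ + k) (by omega)).resolve_right (hbig _ (by omega)).not_ge
        rw [← add_assoc]
        push_cast
        linarith
    obtain ⟨k, hk⟩ := exists_nat_gt (x n₀ ^ 2 / E)
    rw [div_lt_iff₀ hE] at hk
    nlinarith [hdesc k, sq_nonneg (x (n₀ + k))]
  refine eventually_atTop.mpr ⟨m, fun n hn => ?_⟩
  induction n, hn using Nat.le_induction with
  | base => exact hmc
  | succ n hn ih =>
    rcases hn₀ n (hm.trans hn) with hdec | hle
    · nlinarith [hx n, hx (n + 1)]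
    · exact hle

theorem exists_le_max_of_sq_add_sq_le {δ : ℝ} (hδ : 0 < δ) (C : ℝ) :
    ∃ T, ∀ r s t d : ℝ, 0 ≤ r → s ≤ r + 2 → t ^ 2 + d ^ 2 ≤ (r + 4) ^ 2 →
      δ / 4 * t - δ / 8 * s - C ≤ d → t ≤ max r T := by
  refine ⟨max (4 + 16 * C / δ) (max 2 (4096 / δ ^ 2)), fun r s t d hr hs ht hd => ?_⟩
  by_contra! hlt
  simp only [max_lt_iff] at hlt
  obtain ⟨hrt, hCt, h2t, hδt⟩ := hlt
  have hgap : δ / 16 * t ≤ d := by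
    have : 16 * C / δ * δ = 16 * C := div_mul_cancel₀ _ hδ.ne'
    nlinarith
  have hsq : (δ / 16 * t) ^ 2 ≤ 16 * t := by
    have := pow_le_pow_left₀ (by positivity) hgap 2
    nlinarith
  have h1 : δ ^ 2 * t ≤ 4096 := by nlinarith
  have h2 := (div_lt_iff₀ (by positivity)).mp hδt
  linarith

namespace AWTendsto

variable {X : Type*} [NormedAddCommGroup X] {K : ℕ → Set X} {L : Set X}

theorem eventually_exists_dist_lt (h : AWTendsto K L) (hK : ∀ n, (K n).Nonempty) {y : X}
    (hy : y ∈ L) {ε : ℝ} (hε : 0 < ε) : ∀ᶠ n in atTop, ∃ p ∈ K n, dist y p < ε := by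
  obtain ⟨n₀, hn₀⟩ := h ⌈‖y‖⌉₊ ε hε
  filter_upwards [eventually_ge_atTop n₀] with n hn
  have := hn₀ n hn y (Nat.le_ceil _)
  rw [infDist_zero_of_mem hy, sub_zero] at this
  exact (infDist_lt_iff (hK n)).mp (lt_of_abs_lt this)

theorem eventually_forall_exists_dist_lt (h : AWTendsto K L) (hL : L.Nonempty) (R : ℝ) {ε : ℝ}
    (hε : 0 < ε) : ∀ᶠ n in atTop, ∀ z ∈ K n, ‖z‖ ≤ R → ∃ x ∈ L, dist z x < ε := by
  obtain ⟨n₀, hn₀⟩ := h ⌈R⌉₊ ε hε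
  filter_upwards [eventually_ge_atTop n₀] with n hn z hz hzR
  have := hn₀ n hn z (hzR.trans (Nat.le_ceil _))
  rw [infDist_zero_of_mem hz, zero_sub, abs_neg] at this
  exact (infDist_lt_iff hL).mp (lt_of_abs_lt this)

end AWTendsto

section InnerProductSpace

variable {X : Type*} [NormedAddCommGroup X] [InnerProductSpace ℝ X]

theorem inner_le_norm_of_norm_eq_one {w : X} (hw : ‖w‖ = 1) (v : X) : ⟪w, v⟫ ≤ ‖v‖ := by
  simpa only [hw, one_mul] using real_inner_le_norm w v

namespace IsProjOn

variable {K : Set X} {x p z : X}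

theorem inner_sub_sub_nonpos (hK : Convex ℝ K) (h : IsProjOn K x p) (hz : z ∈ K) :
    ⟪x - p, z - p⟫ ≤ 0 := by
  refine (norm_eq_iInf_iff_real_inner_le_zero hK h.1).mp ?_ z hz
  have : Nonempty K := ⟨⟨p, h.1⟩⟩
  have hbdd : BddBelow (Set.range fun q : K => ‖x - q‖) := ⟨0, by
    rintro _ ⟨q, rfl⟩
    exact norm_nonneg _⟩
  refine le_antisymm (le_ciInf fun q => ?_) (ciInf_le hbdd ⟨p, h.1⟩)
  simpa only [dist_eq_norm] using h.2 q q.2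

theorem norm_sub_sq_add_norm_sub_sq_le (hK : Convex ℝ K) (h : IsProjOn K x p) (hz : z ∈ K) :
    ‖z - p‖ ^ 2 + ‖x - p‖ ^ 2 ≤ ‖x - z‖ ^ 2 := by
  rw [show x - z = (x - p) - (z - p) by abel, norm_sub_sq_real (x - p) (z - p)]
  linarith [h.inner_sub_sub_nonpos hK hz]

theorem norm_sub_sq_add_norm_sub_sq_le_sq_add (hK : Convex ℝ K) (h : IsProjOn K x p)
    (hz : z ∈ K) (y : X) : ‖p - y‖ ^ 2 + ‖x - p‖ ^ 2 ≤ (‖x - y‖ + 2 * ‖z - y‖) ^ 2 := by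
  have hfirm := h.norm_sub_sq_add_norm_sub_sq_le hK hz
  have hpz : ‖z - p‖ ≤ ‖x - z‖ := by nlinarith [norm_nonneg (z - p), norm_nonneg (x - z)]
  have hpy : ‖p - y‖ ≤ ‖z - p‖ + ‖z - y‖ := by
    simpa only [dist_eq_norm, norm_sub_rev p z] using dist_triangle p z y
  have hxz : ‖x - z‖ ≤ ‖x - y‖ + ‖z - y‖ := by
    simpa only [dist_eq_norm, norm_sub_rev y z] using dist_triangle x y z
  have := norm_nonneg (z - y)
  calc ‖p - y‖ ^ 2 + ‖x - p‖ ^ 2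
      ≤ (‖z - p‖ + ‖z - y‖) ^ 2 + ‖x - p‖ ^ 2 := by gcongr
    _ ≤ (‖x - z‖ + ‖z - y‖) ^ 2 := by nlinarith
    _ ≤ (‖x - y‖ + 2 * ‖z - y‖) ^ 2 := pow_le_pow_left₀ (by positivity) (by linarith) 2

end IsProjOn

theorem Convex.inner_sub_le_mul_norm_sub {K : Set X} (hK : Convex ℝ K) {w p z : X} {r m : ℝ}
    (hp : p ∈ K) (hz : z ∈ K) (hr : 0 < r) (hrz : r ≤ ‖z - p‖)
    (h : ∀ x ∈ K, ‖x - p‖ = r → ⟪w, x - p⟫ ≤ m * r) : ⟪w, z - p⟫ ≤ m * ‖z - p‖ := by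
  have hd : 0 < ‖z - p‖ := hr.trans_le hrz
  set t := r / ‖z - p‖ with ht
  have htd : t * ‖z - p‖ = r := div_mul_cancel₀ _ hd.ne'
  have ht0 : 0 < t := div_pos hr hd
  have hx := h _ (hK.add_smul_sub_mem hp hz ⟨ht0.le, (div_le_one hd).mpr hrz⟩) (by
    rw [add_sub_cancel_left, norm_smul, Real.norm_of_nonneg ht0.le, htd])
  rw [add_sub_cancel_left, real_inner_smul_right, ← htd] at hx
  exact le_of_mul_le_mul_left (by linarith) ht0

namespace AWTendsto

variable {K : ℕ → Set X} {L : Set X}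

theorem eventually_isProjOn_sq_le (h : AWTendsto K L) (hKne : ∀ n, (K n).Nonempty)
    (hKv : ∀ n, Convex ℝ (K n)) {y : X} (hy : y ∈ L) {η : ℝ} (hη : 0 < η) :
    ∀ᶠ n in atTop, ∀ x p, IsProjOn (K n) x p →
      ‖p - y‖ ^ 2 + ‖x - p‖ ^ 2 ≤ (‖x - y‖ + 2 * η) ^ 2 := by
  filter_upwards [h.eventually_exists_dist_lt hKne hy hη] with n ⟨q, hq, hqy⟩ x p hp
  rw [dist_comm, dist_eq_norm] at hqy
  exact (hp.norm_sub_sq_add_norm_sub_sq_le_sq_add (hKv n) hq y).trans (by gcongr)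

theorem exists_eventually_inner_sub_le (h : AWTendsto K L) (hKne : ∀ n, (K n).Nonempty)
    (hKv : ∀ n, Convex ℝ (K n)) {y w : X} (hy : y ∈ L) (hw : ‖w‖ = 1) {c κ : ℝ}
    (hL : ∀ x ∈ L, 1 ≤ ‖x - y‖ → ⟪w, x - y⟫ ≤ -c) (hκ : κ < c / 2) :
    ∃ C, ∀ᶠ n in atTop, ∀ z ∈ K n, ⟪w, z - y⟫ ≤ C - κ * ‖z - y‖ := by
  set ε := min (1 / 2) (c / 2 - κ)
  have hε : 0 < ε := lt_min (by norm_num) (by linarith)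
  have hε₁ : ε ≤ 1 / 2 := min_le_left _ _
  have hε₂ : ε ≤ c / 2 - κ := min_le_right _ _
  have hinner := inner_le_norm_of_norm_eq_one hw
  refine ⟨3 * (1 + |κ|), ?_⟩
  filter_upwards [h.eventually_exists_dist_lt hKne hy hε,
    h.eventually_forall_exists_dist_lt ⟨y, hy⟩ (‖y‖ + 3) hε] with n ⟨p, hp, hpy⟩ happrox z hz
  rw [dist_comm, dist_eq_norm] at hpy
  -- points of `K n` on the sphere of radius 2 about `p` are `ε`-close to points of `L` at
  -- distance at least 1 from `y`
  have hsphere : ∀ x ∈ K n, ‖x - p‖ = 2 → ⟪w, x - p⟫ ≤ (ε - c / 2) * 2 := by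
    intro x hx hxp
    have hxR : ‖x‖ ≤ ‖y‖ + 3 := by
      have := norm_le_norm_add_norm_sub' x y
      have := dist_triangle x p y
      simp only [dist_eq_norm] at this
      linarith
    obtain ⟨x', hx', hxx'⟩ := happrox x hx hxR
    rw [dist_eq_norm] at hxx'
    have hfar : 1 ≤ ‖x' - y‖ := by
      have := dist_triangle4 x x' y p
      simp only [dist_eq_norm, norm_sub_rev y p] at this
      linarith
    have hsplit : ⟪w, x - p⟫ = ⟪w, x - x'⟫ + ⟪w, x' - y⟫ + ⟪w, y - p⟫ := by
      simp only [inner_sub_right]; ring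
    linarith [hinner (x - x'), hinner (y - p), hL x' hx' hfar, norm_sub_rev y p]
  have hzy := dist_triangle z p y
  have hzp := dist_triangle z y p
  simp only [dist_eq_norm, norm_sub_rev y p] at hzy hzp
  have hsplit : ⟪w, z - y⟫ = ⟪w, z - p⟫ + ⟪w, p - y⟫ := by simp only [inner_sub_right]; ring
  have hκε : |κ| * ε ≤ |κ| * (1 / 2) := mul_le_mul_of_nonneg_left hε₁ (abs_nonneg κ)
  rcases lt_or_ge ‖z - p‖ 2 with hnear | hfar
  · have hκz : κ * ‖z - y‖ ≤ |κ| * 3 :=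
      (mul_le_mul_of_nonneg_right (le_abs_self κ) (norm_nonneg _)).trans
        (mul_le_mul_of_nonneg_left (by linarith) (abs_nonneg κ))
    linarith [hinner (z - y), abs_nonneg κ]
  · have hcone := (hKv n).inner_sub_le_mul_norm_sub hp hz two_pos hfar hsphere
    have h1 : (ε - c / 2) * ‖z - p‖ ≤ -κ * ‖z - p‖ :=
      mul_le_mul_of_nonneg_right (by linarith) (norm_nonneg _)
    have h2 : -κ * ‖z - p‖ ≤ -κ * ‖z - y‖ + |κ| * ε := by
      rcases le_total 0 κ with hk | hk
      · rw [abs_of_nonneg hk]; nlinarith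
      · rw [abs_of_nonpos hk]; nlinarith
    linarith [hinner (p - y), abs_nonneg κ]

end AWTendsto

theorem exists_norm_eq_one_inner_separates [CompleteSpace X] {A B : Set X} (hAv : Convex ℝ A)
    (hAint : (interior A).Nonempty) (hBv : Convex ℝ B) (hBne : B.Nonempty)
    (hAB : Disjoint (interior A) B) :
    ∃ w : X, ‖w‖ = 1 ∧ ∃ u : ℝ, (∀ x ∈ interior A, ⟪w, x⟫ < u) ∧ (∀ x ∈ A, ⟪w, x⟫ ≤ u) ∧
      ∀ x ∈ B, u ≤ ⟪w, x⟫ := by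
  obtain ⟨f, u, hfint, hfB⟩ :=
    geometric_hahn_banach_open hAv.interior isOpen_interior hBv hAB
  have hfA : ∀ x ∈ A, f x ≤ u := fun x hx =>
    closure_minimal (fun x hx => (hfint x hx).le) (isClosed_le f.continuous continuous_const)
      (by rw [hAv.closure_interior_eq_closure_of_nonempty_interior hAint]; exact subset_closure hx)
  set v := (InnerProductSpace.toDual ℝ X).symm f
  have hv : ∀ x, ⟪v, x⟫ = f x := fun x => InnerProductSpace.toDual_symm_apply
  have hv0 : 0 < ‖v‖ := by
    obtain ⟨a, ha⟩ := hAint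
    obtain ⟨b, hb⟩ := hBne
    refine norm_pos_iff.mpr fun hv0 => ?_
    have := (hfint a ha).trans_le (hfB b hb)
    simp only [← hv, hv0, inner_zero_left, lt_self_iff_false] at this
  have hsc : 0 < ‖v‖⁻¹ := inv_pos.mpr hv0
  refine ⟨‖v‖⁻¹ • v, by rw [norm_smul, norm_inv, norm_norm, inv_mul_cancel₀ hv0.ne'],
    ‖v‖⁻¹ * u, fun x hx => ?_, fun x hx => ?_, fun x hx => ?_⟩ <;>
    rw [real_inner_smul_left, hv]
  · exact mul_lt_mul_of_pos_left (hfint x hx) hsc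
  · exact mul_le_mul_of_nonneg_left (hfA x hx) hsc.le
  · exact mul_le_mul_of_nonneg_left (hfB x hx) hsc.le

theorem infDist_frontier_le_sub_inner {A : Set X} {w m : X} {u : ℝ} (hw : ‖w‖ = 1)
    (hint : ∀ x ∈ interior A, ⟪w, x⟫ < u) (hm : m ∈ A) (hmu : ⟪w, m⟫ ≤ u) :
    infDist m (frontier A) ≤ u - ⟪w, m⟫ := by
  by_cases hmi : m ∈ interior A
  · set d := u - ⟪w, m⟫
    have hz : m + d • w ∉ interior A := fun h => (hint _ h).ne (by
      rw [inner_add_right, real_inner_smul_right, real_inner_self_eq_norm_sq, hw]; ring)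
    -- the ball `closedBall m d` is connected and leaves `interior A`, so it meets `frontier A`
    obtain ⟨p, hpd, hpA⟩ : (closedBall m d ∩ frontier A).Nonempty := by
      by_contra hempty
      refine hz <| (convex_closedBall m d).isPreconnected.subset_of_closure_inter_subset
        isOpen_interior ⟨m, mem_closedBall_self (by linarith), hmi⟩ (fun x ⟨hxcl, hxd⟩ => ?_) ?_
      · by_contra hxi
        exact hempty ⟨x, hxd, closure_mono interior_subset hxcl, hxi⟩
      · rw [mem_closedBall, dist_eq_norm, add_sub_cancel_left, norm_smul, hw, mul_one,
          Real.norm_of_nonneg (by linarith)]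
    calc infDist m (frontier A) ≤ dist m p := infDist_le_dist_of_mem hpA
      _ ≤ d := by rw [dist_comm]; exact hpd
  · rw [infDist_zero_of_mem (show m ∈ frontier A from ⟨subset_closure hm, hmi⟩)]
    linarith

/-- `w` strongly exposes `K` at `y`: `y` maximizes `⟪w, ·⟫` on `K`, and every maximizing
sequence in `K` converges to `y`. -/
def StronglyExposes (w : X) (K : Set X) (y : X) : Prop :=
  (∀ x ∈ K, ⟪w, x⟫ ≤ ⟪w, y⟫) ∧
    ∀ ε > 0, ∃ δ > 0, ∀ x ∈ K, ⟪w, y⟫ - δ < ⟪w, x⟫ → ‖x - y‖ < ε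

theorem IsLURPoint.stronglyExposes {A : Set X} {y w : X} (hy : IsLURPoint A y)
    (hAv : Convex ℝ A) (hyA : y ∈ A) (hw : ‖w‖ = 1) (hint : ∀ x ∈ interior A, ⟪w, x⟫ < ⟪w, y⟫)
    (hA : ∀ x ∈ A, ⟪w, x⟫ ≤ ⟪w, y⟫) : StronglyExposes w A y := by
  refine ⟨hA, fun ε hε => ?_⟩
  obtain ⟨δ, hδ, hLUR⟩ := hy ε hε
  refine ⟨2 * δ, by positivity, fun x hx hxy => ?_⟩
  have hmid : (2 : ℝ)⁻¹ • (y + x) ∈ A := by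
    simpa only [smul_add] using
      hAv hyA hx (by norm_num) (by norm_num) (by norm_num : (2 : ℝ)⁻¹ + 2⁻¹ = 1)
  have hdist := infDist_frontier_le_sub_inner hw hint hmid (hA _ hmid)
  rw [real_inner_smul_right, inner_add_right] at hdist
  rw [norm_sub_rev]
  exact hLUR x hx (by linarith)

theorem StronglyExposes.exists_eventually_norm_sub_lt {A B : Set X} {An Bn : ℕ → Set X}
    {w y : X} (hA : StronglyExposes w A y) (hw : ‖w‖ = 1) (hB : ∀ z ∈ B, ⟪w, y⟫ ≤ ⟪w, z⟫)
    (hAW : AWTendsto An A) (hBW : AWTendsto Bn B) (hyA : y ∈ A) (hyB : y ∈ B) (R : ℝ) {ε : ℝ}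
    (hε : 0 < ε) : ∃ δ > 0, ∀ᶠ n in atTop, ∀ x ∈ An n, ∀ z ∈ Bn n, ‖x‖ ≤ R → ‖z‖ ≤ R →
      ‖x - z‖ < δ → ‖x - y‖ < ε := by
  obtain ⟨δ, hδ, hexp⟩ := hA.2 (ε / 2) (half_pos hε)
  set η := min (δ / 3) (ε / 2)
  have hη : 0 < η := by positivity
  have hηδ : η ≤ δ / 3 := min_le_left _ _
  have hηε : η ≤ ε / 2 := min_le_right _ _
  refine ⟨δ / 3, by positivity, ?_⟩
  filter_upwards [hAW.eventually_forall_exists_dist_lt ⟨y, hyA⟩ R hη,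
    hBW.eventually_forall_exists_dist_lt ⟨y, hyB⟩ R hη] with n hAn hBn x hx z hz hxR hzR hxz
  obtain ⟨x', hx', hxx'⟩ := hAn x hx hxR
  obtain ⟨z', hz', hzz'⟩ := hBn z hz hzR
  have hx'z' := dist_triangle4 x' x z z'
  have hx'y := dist_triangle x x' y
  rw [dist_comm x' x] at hx'z'
  simp only [dist_eq_norm] at hx'z' hx'y hxx' hzz'
  have hclose := hexp x' hx' (by
    linarith [inner_le_norm_of_norm_eq_one hw (z' - x'), inner_sub_right (𝕜 := ℝ) w z' x',
      hB z' hz', norm_sub_rev z' x'])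
  linarith

namespace IsPerturbedAPS

variable {A B : Set X} {An Bn : ℕ → Set X} {w y a₀ : X} {a b : ℕ → X}

theorem eventually_norm_sub_le (hab : IsPerturbedAPS An Bn a₀ a b) (hAW : AWTendsto An A)
    (hBW : AWTendsto Bn B) (hAne : ∀ n, (An n).Nonempty) (hBne : ∀ n, (Bn n).Nonempty)
    (hAv : ∀ n, Convex ℝ (An n)) (hBv : ∀ n, Convex ℝ (Bn n)) (hyA : y ∈ A) (hyB : y ∈ B)
    {η : ℝ} (hη : 0 < η) :
    ∀ᶠ n in atTop, ‖b (n + 1) - y‖ ≤ ‖a n - y‖ + 2 * η ∧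
      ‖a (n + 1) - y‖ ^ 2 + ‖b (n + 1) - a (n + 1)‖ ^ 2 ≤ (‖a n - y‖ + 4 * η) ^ 2 := by
  filter_upwards
    [(tendsto_add_atTop_nat 1).eventually (hBW.eventually_isProjOn_sq_le hBne hBv hyB hη),
      (tendsto_add_atTop_nat 1).eventually (hAW.eventually_isProjOn_sq_le hAne hAv hyA hη)]
    with n hBstep hAstep
  have hb := hBstep _ _ (hab.2 n).1
  have hb' : ‖b (n + 1) - y‖ ≤ ‖a n - y‖ + 2 * η := le_of_pow_le_pow_left₀ two_ne_zero
    (by positivity) (by nlinarith [norm_nonneg (a n - b (n + 1))])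
  exact ⟨hb', (hAstep _ _ (hab.2 n).2).trans (pow_le_pow_left₀ (by positivity) (by linarith) 2)⟩

theorem exists_eventually_norm_sub_le (hab : IsPerturbedAPS An Bn a₀ a b)
    (hexp : StronglyExposes w A y) (hw : ‖w‖ = 1) (hB : ∀ z ∈ B, ⟪w, y⟫ ≤ ⟪w, z⟫)
    (hAW : AWTendsto An A) (hBW : AWTendsto Bn B) (hAne : ∀ n, (An n).Nonempty)
    (hBne : ∀ n, (Bn n).Nonempty) (hAv : ∀ n, Convex ℝ (An n)) (hBv : ∀ n, Convex ℝ (Bn n))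
    (hyA : y ∈ A) (hyB : y ∈ B) : ∃ R, ∀ᶠ n in atTop, ‖a n - y‖ ≤ R := by
  obtain ⟨δ, hδ, hexp₁⟩ := hexp.2 1 one_pos
  have hAfar : ∀ x ∈ A, 1 ≤ ‖x - y‖ → ⟪w, x - y⟫ ≤ -δ := fun x hx h1 => by
    by_contra! hlt
    rw [inner_sub_right] at hlt
    exact (hexp₁ x hx (by linarith)).not_ge h1
  have hBfar : ∀ x ∈ B, 1 ≤ ‖x - y‖ → ⟪-w, x - y⟫ ≤ -0 := fun x hx _ => by
    rw [inner_neg_left, inner_sub_right]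
    linarith [hB x hx]
  obtain ⟨CA, hCA⟩ := hAW.exists_eventually_inner_sub_le hAne hAv hyA hw hAfar
    (κ := δ / 4) (by linarith)
  obtain ⟨CB, hCB⟩ := hBW.exists_eventually_inner_sub_le hBne hBv hyB (by rw [norm_neg, hw])
    hBfar (κ := -(δ / 8)) (by linarith)
  obtain ⟨T, hT⟩ := exists_le_max_of_sq_add_sq_le hδ (CA + CB)
  refine exists_eventually_le_of_eventually_le_max (T := T) ?_
  filter_upwards [hab.eventually_norm_sub_le hAW hBW hAne hBne hAv hBv hyA hyB one_pos,
    (tendsto_add_atTop_nat 1).eventually hCA, (tendsto_add_atTop_nat 1).eventually hCB]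
    with n ⟨hb, ha⟩ hAcone hBcone
  have hA' := hAcone _ (hab.2 n).2.1
  have hB' := hBcone _ (hab.2 n).1.1
  rw [inner_neg_left] at hB'
  have hgap : ⟪w, b (n + 1) - a (n + 1)⟫ = ⟪w, b (n + 1) - y⟫ - ⟪w, a (n + 1) - y⟫ := by
    simp only [inner_sub_right]; ring
  refine hT ‖a n - y‖ ‖b (n + 1) - y‖ ‖a (n + 1) - y‖ ‖b (n + 1) - a (n + 1)‖ (norm_nonneg _)
    (by linarith) (by linarith) ?_
  linarith [inner_le_norm_of_norm_eq_one hw (b (n + 1) - a (n + 1))]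

theorem tendsto_a (hab : IsPerturbedAPS An Bn a₀ a b)
    (hexp : StronglyExposes w A y) (hw : ‖w‖ = 1) (hB : ∀ z ∈ B, ⟪w, y⟫ ≤ ⟪w, z⟫)
    (hAW : AWTendsto An A) (hBW : AWTendsto Bn B) (hAne : ∀ n, (An n).Nonempty)
    (hBne : ∀ n, (Bn n).Nonempty) (hAv : ∀ n, Convex ℝ (An n)) (hBv : ∀ n, Convex ℝ (Bn n))
    (hyA : y ∈ A) (hyB : y ∈ B) {R : ℝ} (hR : ∀ᶠ n in atTop, ‖a n - y‖ ≤ R) :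
    Tendsto a atTop (𝓝 y) := by
  refine Metric.tendsto_nhds.mpr fun ε hε => ?_
  suffices ∀ᶠ n in atTop, ‖a n - y‖ ≤ ε / 2 by
    filter_upwards [this] with n hn
    rw [dist_eq_norm]
    linarith
  obtain ⟨δ, hδ, hwp⟩ :=
    hexp.exists_eventually_norm_sub_lt hw hB hAW hBW hyA hyB (R + 1 + ‖y‖) (half_pos hε)
  set η := min (1 / 2) (δ ^ 2 / (32 * (|R| + 1)))
  have hη : 0 < η := by positivity
  have hη₁ : η ≤ 1 / 2 := min_le_left _ _
  have hηδ : 8 * η * (|R| + 1) ≤ δ ^ 2 / 4 := by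
    have : η * (32 * (|R| + 1)) ≤ δ ^ 2 :=
      (le_div_iff₀ (by positivity)).mp (min_le_right _ _)
    linarith
  refine eventually_le_of_eventually_sq_le_sub_or_le (fun n => norm_nonneg _)
    (E := δ ^ 2 / 2) (by positivity) ?_
  filter_upwards [hR, (tendsto_add_atTop_nat 1).eventually hR,
    (tendsto_add_atTop_nat 1).eventually hwp,
    hab.eventually_norm_sub_le hAW hBW hAne hBne hAv hBv hyA hyB hη]
    with n hRn hRn₁ hwpn ⟨hb, ha⟩
  rcases le_or_gt δ ‖b (n + 1) - a (n + 1)‖ with hbig | hsmall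
  · left
    have herr : (‖a n - y‖ + 4 * η) ^ 2 ≤ ‖a n - y‖ ^ 2 + δ ^ 2 / 2 := by
      nlinarith [le_abs_self R, norm_nonneg (a n - y)]
    nlinarith [pow_le_pow_left₀ hδ.le hbig 2]
  · right
    have hnorm : ∀ v : X, ‖v - y‖ ≤ R + 1 → ‖v‖ ≤ R + 1 + ‖y‖ := fun v hv => by
      linarith [norm_le_norm_add_norm_sub' v y]
    exact (hwpn _ (hab.2 n).2.1 _ (hab.2 n).1.1 (hnorm _ (by linarith))
      (hnorm _ (by linarith)) (by rwa [norm_sub_rev])).le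

theorem tendsto_b (hab : IsPerturbedAPS An Bn a₀ a b) (hBW : AWTendsto Bn B)
    (hBne : ∀ n, (Bn n).Nonempty) (hBv : ∀ n, Convex ℝ (Bn n)) (hyB : y ∈ B)
    (ha : Tendsto a atTop (𝓝 y)) : Tendsto b atTop (𝓝 y) := by
  refine (tendsto_add_atTop_iff_nat 1).mp (Metric.tendsto_nhds.mpr fun ε hε => ?_)
  filter_upwards [Metric.tendsto_nhds.mp ha (ε / 2) (half_pos hε),
    (tendsto_add_atTop_nat 1).eventually
      (hBW.eventually_isProjOn_sq_le hBne hBv hyB (by positivity : 0 < ε / 8))]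
    with n han hstep
  have := hstep _ _ (hab.2 n).1
  rw [dist_eq_norm] at han ⊢
  have hsq : ‖b (n + 1) - y‖ ^ 2 < ε ^ 2 := by
    nlinarith [norm_nonneg (a n - y), norm_nonneg (a n - b (n + 1))]
  exact (pow_lt_pow_iff_left₀ (norm_nonneg _) hε.le two_ne_zero).mp hsq

end IsPerturbedAPS

end InnerProductSpace

theorem stmt1_general {X : Type*} [NormedAddCommGroup X] [InnerProductSpace ℝ X] [CompleteSpace X]
    (B : Set X) (hBv : Convex ℝ B)
    (A : Set X) (hAv : Convex ℝ A) (hAint : (interior A).Nonempty)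
    (y : X) (hyA : y ∈ frontier A) (hyLUR : IsLURPoint A y)
    (An Bn : ℕ → Set X)
    (hAn : ∀ n, (An n).Nonempty ∧ IsClosed (An n) ∧ Convex ℝ (An n))
    (hBn : ∀ n, (Bn n).Nonempty ∧ IsClosed (Bn n) ∧ Convex ℝ (Bn n))
    (hAW : AWTendsto An A) (hBW : AWTendsto Bn B)
    (hAB : A ∩ B = {y})
    (a₀ : X) (a b : ℕ → X) (hab : IsPerturbedAPS An Bn a₀ a b) :
    Filter.Tendsto a Filter.atTop (nhds y) ∧ Filter.Tendsto b Filter.atTop (nhds y) := by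
  have hy : y ∈ A ∩ B := hAB ▸ rfl
  have hdisj : Disjoint (interior A) B := Set.disjoint_left.mpr fun x hxA hxB => by
    have hxy : x ∈ A ∩ B := ⟨interior_subset hxA, hxB⟩
    rw [hAB, Set.mem_singleton_iff] at hxy
    exact hyA.2 (hxy ▸ hxA)
  obtain ⟨w, hw, u, hint, hA, hB⟩ :=
    exists_norm_eq_one_inner_separates hAv hAint hBv ⟨y, hy.2⟩ hdisj
  obtain rfl : ⟪w, y⟫ = u := le_antisymm (hA y hy.1) (hB y hy.2)
  have hexp := hyLUR.stronglyExposes hAv hy.1 hw hint hA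
  have hAne n := (hAn n).1
  have hBne n := (hBn n).1
  have hAnv n := (hAn n).2.2
  have hBnv n := (hBn n).2.2
  obtain ⟨R, hR⟩ := hab.exists_eventually_norm_sub_le hexp hw hB hAW hBW hAne hBne hAnv hBnv
    hy.1 hy.2
  have ha := hab.tendsto_a hexp hw hB hAW hBW hAne hBne hAnv hBnv hy.1 hy.2 hR
  exact ⟨ha, hab.tendsto_b hBW hBne hBnv hy.2 ha⟩

theorem stmt1 {X : Type*} [NormedAddCommGroup X] [InnerProductSpace ℝ X] [CompleteSpace X]
    (B : Set X) (hBne : B.Nonempty) (hBc : IsClosed B) (hBv : Convex ℝ B)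
    (A : Set X) (hAc : IsClosed A) (hAv : Convex ℝ A) (hAint : (interior A).Nonempty)
    (y : X) (hyA : y ∈ frontier A) (hyLUR : IsLURPoint A y)
    (An Bn : ℕ → Set X)
    (hAn : ∀ n, (An n).Nonempty ∧ IsClosed (An n) ∧ Convex ℝ (An n))
    (hBn : ∀ n, (Bn n).Nonempty ∧ IsClosed (Bn n) ∧ Convex ℝ (Bn n))
    (hAW : AWTendsto An A) (hBW : AWTendsto Bn B)
    (hAB : A ∩ B = {y})
    (a₀ : X) (a b : ℕ → X) (hab : IsPerturbedAPS An Bn a₀ a b) :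
    Filter.Tendsto a Filter.atTop (nhds y) ∧ Filter.Tendsto b Filter.atTop (nhds y) :=
  stmt1_general B hBv A hAv hAint y hyA hyLUR An Bn hAn hBn hAW hBW hAB a₀ a b hab
end

section
/- Let X be a real Hilbert space and let A, B be bodies in X (closed convex sets with nonempty interior) with A ∩ B ≠ ∅. If A is an LUR body (every point of ∂A is an LUR point of A), then the couple (A, B) is stable. -/
open Filter Metric Topology

/-- The couple `(A, B)` is stable: for every sequences of nonempty closed convex sets
Attouch–Wets converging to `A` and `B` respectively, and every starting point, the
corresponding perturbed alternating projections sequences converge in norm. -/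
def StablePair {X : Type*} [NormedAddCommGroup X] [NormedSpace ℝ X] (A B : Set X) : Prop :=
  ∀ An Bn : ℕ → Set X,
    (∀ n, (An n).Nonempty ∧ IsClosed (An n) ∧ Convex ℝ (An n)) →
    (∀ n, (Bn n).Nonempty ∧ IsClosed (Bn n) ∧ Convex ℝ (Bn n)) →
    AWTendsto An A → AWTendsto Bn B →
    ∀ a₀ : X, ∀ a b : ℕ → X, IsPerturbedAPS An Bn a₀ a b →
      (∃ la : X, Filter.Tendsto a Filter.atTop (nhds la)) ∧
      (∃ lb : X, Filter.Tendsto b Filter.atTop (nhds lb))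

/-!
If `B` meets the interior of `A`, the two bodies share an interior ball, and eventually all the
perturbed sets contain a slightly smaller ball around its centre `w`. Projecting onto a convex set
that contains the ball of radius `ρ` around `w` lowers `‖· - w‖²` by at least `2ρ` times the
length of the step, so the steps are summable and both sequences converge to a common limit.

Otherwise a functional `f` separates `interior A` from `B`, and it supports both sets at a common
point `c`. Local uniform rotundity at `c` means that thin slabs `{f c - θ < f}` meet `A` only near
`c`; by convexity, away from `c` the sets `An n` lie below the hyperplane `f = f c` at a depth
proportional to the distance from `c`, while the `Bn n` lie almost above it. A point of `An n` at
distance `r ≥ ε` from `c` is therefore at distance of order `r` from `Bn (n + 1)`, so one round of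
projections shrinks the distance to `c` by a fixed factor, up to errors that vanish as `n → ∞`.
Hence `a n → c` and `b n → c`.
-/
open scoped RealInnerProductSpace

section Projection

variable {X : Type*} [NormedAddCommGroup X] [InnerProductSpace ℝ X] {K : Set X} {x p q : X}

theorem IsProjOn.inner_sub_nonpos (hK : Convex ℝ K) (h : IsProjOn K x p) (hq : q ∈ K) :
    ⟪x - p, q - p⟫ ≤ 0 := by
  have : Nonempty K := ⟨⟨p, h.1⟩⟩
  have hinf : ‖x - p‖ = ⨅ w : K, ‖x - w‖ :=
    le_antisymm (le_ciInf fun w => by simpa only [dist_eq_norm] using h.2 w w.2)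
      (ciInf_le ⟨0, Set.forall_mem_range.2 fun _ => norm_nonneg _⟩ (⟨p, h.1⟩ : K))
  exact (norm_eq_iInf_iff_real_inner_le_zero hK h.1).1 hinf q hq

theorem IsProjOn.norm_sub_sq_add_le (hK : Convex ℝ K) (h : IsProjOn K x p) (hq : q ∈ K) :
    ‖p - q‖ ^ 2 + ‖x - p‖ ^ 2 ≤ ‖x - q‖ ^ 2 := by
  have hinner := h.inner_sub_nonpos hK hq
  have hexpand := norm_sub_sq_real (x - p) (q - p)
  rw [show x - p - (q - p) = x - q by abel, norm_sub_rev q p] at hexpand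
  linarith

theorem IsProjOn.norm_sub_le (hK : Convex ℝ K) (h : IsProjOn K x p) (hq : q ∈ K) :
    ‖p - q‖ ≤ ‖x - q‖ :=
  (pow_le_pow_iff_left₀ (norm_nonneg _) (norm_nonneg _) two_ne_zero).1 <| by
    nlinarith [h.norm_sub_sq_add_le hK hq]

theorem IsProjOn.norm_sub_le_add (hK : Convex ℝ K) (h : IsProjOn K x p) (hq : q ∈ K) (c : X) :
    ‖p - c‖ ≤ ‖x - c‖ + 2 * ‖q - c‖ :=
  calc ‖p - c‖ ≤ ‖p - q‖ + ‖q - c‖ := norm_sub_le_norm_sub_add_norm_sub p q c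
    _ ≤ ‖x - q‖ + ‖q - c‖ := by gcongr; exact h.norm_sub_le hK hq
    _ ≤ ‖x - c‖ + 2 * ‖q - c‖ := by
      linarith [norm_sub_le_norm_sub_add_norm_sub x c q, norm_sub_rev c q]

theorem IsProjOn.norm_sub_le_of_mul_le (hK : Convex ℝ K) (h : IsProjOn K x p) (hq : q ∈ K)
    {c : X} {l : ℝ} (hl : 0 ≤ l) (hqc : ‖q - c‖ ≤ ‖x - c‖) (hstep : l * ‖x - c‖ ≤ ‖x - p‖) :
    ‖p - c‖ ≤ (1 - l ^ 2 / 4) * ‖x - c‖ + 2 * ‖q - c‖ := by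
  set r := ‖x - c‖
  set ζ := ‖q - c‖
  set a := ‖x - q‖
  set s := ‖p - q‖
  set d := ‖x - p‖
  have hpyth : s ^ 2 + d ^ 2 ≤ a ^ 2 := h.norm_sub_sq_add_le hK hq
  have hpc : ‖p - c‖ ≤ s + ζ := norm_sub_le_norm_sub_add_norm_sub p q c
  have ha : a ≤ r + ζ := by
    have := norm_sub_le_norm_sub_add_norm_sub x c q
    rwa [norm_sub_rev c q] at this
  have hs0 : 0 ≤ s := norm_nonneg _
  have hd0 : 0 ≤ d := norm_nonneg _
  have hζ0 : 0 ≤ ζ := norm_nonneg _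
  have hd : (l * r) ^ 2 ≤ d ^ 2 := pow_le_pow_left₀ (mul_nonneg hl (norm_nonneg _)) hstep 2
  -- `s ≤ a - d² / (2a)`, cleared of denominators
  have hsa : 2 * a * s ≤ 2 * a ^ 2 - d ^ 2 := by nlinarith
  have hscaled : 4 * r * s ≤ 4 * r * a - l ^ 2 * r ^ 2 := by
    rcases (norm_nonneg (x - q)).eq_or_lt with ha0 | ha0
    · have hs : s = 0 := by nlinarith
      nlinarith
    · have : a * (4 * r * s) ≤ a * (4 * r * a - d ^ 2) := by nlinarith
      nlinarith [le_of_mul_le_mul_left this ha0]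
  rcases (norm_nonneg (x - c)).eq_or_lt with hr0 | hr0
  · have : ‖p - c‖ ≤ r + 2 * ζ := h.norm_sub_le_add hK hq c
    rw [show r = 0 from hr0.symm] at this ⊢
    linarith
  · have : s ≤ a - l ^ 2 * r / 4 := by nlinarith
    nlinarith

theorem IsProjOn.sq_norm_sub_add_le_of_closedBall_subset (hK : Convex ℝ K) (h : IsProjOn K x p)
    {w : X} {ρ : ℝ} (hρ : 0 ≤ ρ) (hball : closedBall w ρ ⊆ K) :
    ‖p - w‖ ^ 2 + 2 * ρ * ‖x - p‖ ≤ ‖x - w‖ ^ 2 := by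
  have hexpand := norm_sub_sq_real (x - p) (w - p)
  rw [show x - p - (w - p) = x - w by abel, norm_sub_rev w p] at hexpand
  rcases eq_or_ne x p with rfl | hxp
  · simp
  have hd : 0 < ‖x - p‖ := norm_pos_iff.2 (sub_ne_zero.2 hxp)
  -- test the variational inequality at the point of the ball pushed towards `x - p`
  have hz : w + (ρ / ‖x - p‖) • (x - p) ∈ K := hball <| by
    rw [mem_closedBall, dist_eq_norm, add_sub_cancel_left, norm_smul, Real.norm_of_nonneg
      (by positivity), div_mul_cancel₀ _ hd.ne']
  have hinner := h.inner_sub_nonpos hK hz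
  rw [show w + (ρ / ‖x - p‖) • (x - p) - p = (w - p) + (ρ / ‖x - p‖) • (x - p) by abel,
    inner_add_right, real_inner_smul_right, real_inner_self_eq_norm_sq] at hinner
  have : ρ / ‖x - p‖ * ‖x - p‖ ^ 2 = ρ * ‖x - p‖ := by field_simp
  nlinarith

end Projection

namespace AWTendsto

variable {X : Type*} [NormedAddCommGroup X] {A : ℕ → Set X} {L : Set X}

theorem eventually_abs_infDist_sub_lt (h : AWTendsto A L) (R : ℝ) {ε : ℝ} (hε : 0 < ε) :
    ∀ᶠ n in atTop, ∀ x : X, ‖x‖ ≤ R →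
      |infDist x (A n) - infDist x L| < ε := by
  obtain ⟨n₀, hn₀⟩ := h ⌈R⌉₊ ε hε
  exact eventually_atTop.2 ⟨n₀, fun n hn x hx => hn₀ n hn x (hx.trans (Nat.le_ceil R))⟩

theorem eventually_exists_mem_limit_near (h : AWTendsto A L) (hL : L.Nonempty) (R : ℝ)
    {ε : ℝ} (hε : 0 < ε) :
    ∀ᶠ n in atTop, ∀ x ∈ A n, ‖x‖ ≤ R → ∃ y ∈ L, ‖x - y‖ < ε := by
  filter_upwards [h.eventually_abs_infDist_sub_lt R hε] with n hn x hx hxR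
  have := hn x hxR
  rw [infDist_zero_of_mem hx, zero_sub, abs_neg, abs_of_nonneg infDist_nonneg] at this
  simpa only [dist_eq_norm] using (infDist_lt_iff hL).1 this

theorem eventually_exists_mem_near (h : AWTendsto A L) (hA : ∀ n, (A n).Nonempty) (R : ℝ)
    {ε : ℝ} (hε : 0 < ε) :
    ∀ᶠ n in atTop, ∀ x ∈ L, ‖x‖ ≤ R → ∃ y ∈ A n, ‖x - y‖ < ε := by
  filter_upwards [h.eventually_abs_infDist_sub_lt R hε] with n hn x hx hxR
  have := hn x hxR
  rw [infDist_zero_of_mem hx, sub_zero, abs_of_nonneg infDist_nonneg] at this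
  simpa only [dist_eq_norm] using (infDist_lt_iff (hA n)).1 this

theorem eventually_exists_mem_near_of_mem (h : AWTendsto A L) (hA : ∀ n, (A n).Nonempty)
    {c : X} (hc : c ∈ L) {ε : ℝ} (hε : 0 < ε) :
    ∀ᶠ n in atTop, ∃ q ∈ A n, ‖q - c‖ < ε := by
  filter_upwards [h.eventually_exists_mem_near hA ‖c‖ hε] with n hn
  obtain ⟨q, hq, hcq⟩ := hn c hc le_rfl
  exact ⟨q, hq, by rwa [norm_sub_rev]⟩

end AWTendsto

theorem AWTendsto.eventually_closedBall_subset {X : Type*} [NormedAddCommGroup X]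
    [InnerProductSpace ℝ X] [CompleteSpace X] {A : ℕ → Set X} {L : Set X} (h : AWTendsto A L)
    (hA : ∀ n, (A n).Nonempty ∧ IsClosed (A n) ∧ Convex ℝ (A n)) {w : X} {ρ : ℝ} (hρ : 0 < ρ)
    (hball : closedBall w (2 * ρ) ⊆ L) :
    ∀ᶠ n in atTop, closedBall w ρ ⊆ A n := by
  filter_upwards [h.eventually_exists_mem_near (fun n => (hA n).1) (‖w‖ + 2 * ρ) hρ]
    with n hn x hx
  by_contra hxn
  obtain ⟨hne, hclosed, hconv⟩ := hA n
  obtain ⟨p, hp, hpinf⟩ := exists_norm_eq_iInf_of_complete_convex hne hclosed.isComplete hconv x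
  have hvar := (norm_eq_iInf_iff_real_inner_le_zero hconv hp).1 hpinf
  have hxp : x - p ≠ 0 := sub_ne_zero.2 fun hxp => hxn (hxp ▸ hp)
  set u := (‖x - p‖⁻¹ : ℝ) • (x - p)
  have hu : ‖u‖ = 1 := norm_smul_inv_norm hxp
  -- the point of `L` on the far side of the ball, in the direction `u`, is far from `A n`
  have hy : w + (2 * ρ) • u ∈ L := hball <| by
    rw [mem_closedBall, dist_eq_norm, add_sub_cancel_left, norm_smul, hu,
      Real.norm_of_nonneg (by positivity), mul_one]
  have hyR : ‖w + (2 * ρ) • u‖ ≤ ‖w‖ + 2 * ρ := by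
    simpa [norm_smul, hu, abs_of_pos hρ] using norm_add_le w ((2 * ρ) • u)
  obtain ⟨q, hq, hyq⟩ := hn _ hy hyR
  have hinner : ⟪u, q - p⟫ ≤ 0 := by
    rw [real_inner_smul_left]
    exact mul_nonpos_of_nonneg_of_nonpos (by positivity) (hvar q hq)
  have hsplit : q - p = (q - (w + (2 * ρ) • u)) + (2 * ρ) • u + (w - x) + (x - p) := by abel
  rw [hsplit, inner_add_right, inner_add_right, inner_add_right, real_inner_smul_right,
    real_inner_self_eq_norm_sq, hu] at hinner
  have hlow : ∀ v, -‖v‖ ≤ ⟪u, v⟫ := fun v => by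
    have := real_inner_le_norm u (-v)
    rw [inner_neg_right, norm_neg, hu, one_mul] at this
    linarith
  have hxp' : ⟪u, x - p⟫ = ‖x - p‖ := by
    rw [real_inner_smul_left, real_inner_self_eq_norm_sq]
    field_simp [norm_ne_zero_iff.2 hxp]
  rw [mem_closedBall, dist_eq_norm, ← norm_neg, neg_sub] at hx
  rw [norm_sub_rev] at hyq
  linarith [hlow (q - (w + (2 * ρ) • u)), hlow (w - x), norm_pos_iff.2 hxp]

theorem summable_of_le_sub {d u : ℕ → ℝ} (hd : ∀ n, 0 ≤ d n) (hu : ∀ n, 0 ≤ u n)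
    (h : ∀ n, d n ≤ u n - u (n + 1)) : Summable d :=
  summable_of_sum_range_le hd fun n =>
    (Finset.sum_le_sum fun i _ => h i).trans <| by rw [Finset.sum_range_sub']; linarith [hu n]

theorem eventually_le_add_of_contracting {r : ℕ → ℝ} {ε k δ : ℝ} (hr : ∀ n, 0 ≤ r n)
    (hk : 0 ≤ k) (hδ : 0 ≤ δ) (hδk : δ < k * ε)
    (h : ∀ᶠ n in atTop, r (n + 1) ≤ r n + δ ∧ (ε ≤ r n → r (n + 1) ≤ (1 - k) * r n + δ)) :
    ∀ᶠ n in atTop, r n ≤ ε + δ := by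
  obtain ⟨N, hN⟩ := eventually_atTop.1 h
  have hdrop : ∀ n ≥ N, ε ≤ r n → r (n + 1) ≤ r n - (k * ε - δ) := fun n hn hεr => by
    nlinarith [(hN n hn).2 hεr, mul_le_mul_of_nonneg_left hεr hk]
  obtain ⟨m, hmN, hm⟩ : ∃ m ≥ N, r m < ε := by
    by_contra! hall
    have hiter : ∀ j : ℕ, r (N + j) ≤ r N - j * (k * ε - δ) := by
      intro j
      induction j with
      | zero => simp
      | succ j ih =>
        have := hdrop (N + j) (by omega) (hall _ (by omega))
        push_cast
        rw [← add_assoc]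
        linarith
    obtain ⟨j, hj⟩ := exists_nat_gt (r N / (k * ε - δ))
    rw [div_lt_iff₀ (by linarith)] at hj
    linarith [hiter j, hr (N + j)]
  refine eventually_atTop.2 ⟨m, fun n hn => ?_⟩
  induction n, hn using Nat.le_induction with
  | base => linarith
  | succ n hmn ih =>
    rcases lt_or_ge (r n) ε with hlt | hge
    · linarith [(hN n (by omega)).1]
    · linarith [hdrop n (by omega) hge]

section Regular

variable {X : Type*} [NormedAddCommGroup X] [InnerProductSpace ℝ X] [CompleteSpace X]
  {A B : Set X} {An Bn : ℕ → Set X} {a₀ : X} {a b : ℕ → X}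

theorem IsPerturbedAPS.exists_tendsto_of_interior_inter_nonempty
    (hab : IsPerturbedAPS An Bn a₀ a b)
    (hAn : ∀ n, (An n).Nonempty ∧ IsClosed (An n) ∧ Convex ℝ (An n))
    (hBn : ∀ n, (Bn n).Nonempty ∧ IsClosed (Bn n) ∧ Convex ℝ (Bn n))
    (hAW : AWTendsto An A) (hBW : AWTendsto Bn B) (hAB : (interior A ∩ interior B).Nonempty) :
    ∃ l, Tendsto a atTop (𝓝 l) ∧ Tendsto b atTop (𝓝 l) := by
  obtain ⟨w, hw⟩ := hAB
  obtain ⟨ε, hε, hεAB⟩ := Metric.isOpen_iff.1 (isOpen_interior.inter isOpen_interior) w hw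
  have hρ : 0 < ε / 4 := by positivity
  have hball : closedBall w (2 * (ε / 4)) ⊆ interior A ∩ interior B :=
    (closedBall_subset_ball (by linarith)).trans hεAB
  obtain ⟨N, hN⟩ := eventually_atTop.1 <| (tendsto_add_atTop_nat 1).eventually <|
    (hAW.eventually_closedBall_subset hAn hρ
      ((hball.trans Set.inter_subset_left).trans interior_subset)).and
    (hBW.eventually_closedBall_subset hBn hρ
      ((hball.trans Set.inter_subset_right).trans interior_subset))
  set G : ℕ → ℝ := fun n => ‖a n - b (n + 1)‖ + ‖b (n + 1) - a (n + 1)‖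
  have hdescent : ∀ n ≥ N,
      2 * (ε / 4) * G n ≤ ‖a n - w‖ ^ 2 - ‖a (n + 1) - w‖ ^ 2 := by
    intro n hn
    have hB := (hab.2 n).1.sq_norm_sub_add_le_of_closedBall_subset (hBn (n + 1)).2.2 hρ.le
      (hN n hn).2
    have hA := (hab.2 n).2.sq_norm_sub_add_le_of_closedBall_subset (hAn (n + 1)).2.2 hρ.le
      (hN n hn).1
    simp only [G]
    linarith
  have hG : Summable G := by
    refine (summable_nat_add_iff N).1 <| summable_of_le_sub (u := fun n =>
      ‖a (n + N) - w‖ ^ 2 / (2 * (ε / 4))) (fun n => by positivity) (fun n => by positivity)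
      fun n => ?_
    rw [← sub_div, le_div_iff₀ (by positivity), mul_comm, show n + 1 + N = n + N + 1 by ring]
    exact hdescent (n + N) (by omega)
  obtain ⟨l, hl⟩ := cauchySeq_tendsto_of_complete <| cauchySeq_of_summable_dist <|
    hG.of_nonneg_of_le (fun n => dist_nonneg) fun n =>
      (dist_triangle (a n) (b (n + 1)) (a (n + 1))).trans_eq (by simp only [G, dist_eq_norm])
  refine ⟨l, hl, (tendsto_add_atTop_iff_nat 1).1 ?_⟩
  have hgap : Tendsto (fun n => b (n + 1) - a (n + 1)) atTop (𝓝 0) :=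
    squeeze_zero_norm (fun n => le_add_of_nonneg_left (norm_nonneg _)) hG.tendsto_atTop_zero
  simpa using hgap.add ((tendsto_add_atTop_iff_nat 1).2 hl)

end Regular

section Geometry

variable {E : Type*} [NormedAddCommGroup E] [NormedSpace ℝ E]

theorem ContinuousLinearMap.sub_le_norm_sub_of_opNorm_le_one {f : E →L[ℝ] ℝ} (hf : ‖f‖ ≤ 1)
    (x y : E) : f x - f y ≤ ‖x - y‖ :=
  calc f x - f y = f (x - y) := (map_sub f x y).symm
    _ ≤ ‖f (x - y)‖ := le_abs_self _
    _ ≤ ‖f‖ * ‖x - y‖ := f.le_opNorm _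
    _ ≤ ‖x - y‖ := mul_le_of_le_one_left (norm_nonneg _) hf

theorem Convex.mul_norm_sub_le_of_forall_norm_sub_eq {K : Set E} (hK : Convex ℝ K) {q : E}
    (hq : q ∈ K) (f : E →L[ℝ] ℝ) {r m : ℝ} (hr : 0 < r)
    (h : ∀ w ∈ K, ‖w - q‖ = r → m ≤ f w - f q) {x : E} (hx : x ∈ K) (hrx : r ≤ ‖x - q‖) :
    m * ‖x - q‖ ≤ r * (f x - f q) := by
  have hxq : 0 < ‖x - q‖ := hr.trans_le hrx
  have ht : r / ‖x - q‖ ∈ Set.Icc (0 : ℝ) 1 :=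
    ⟨by positivity, (div_le_one hxq).2 hrx⟩
  have hw := h _ (hK.add_smul_sub_mem hq hx ht) <| by
    rw [add_sub_cancel_left, norm_smul, Real.norm_of_nonneg ht.1, div_mul_cancel₀ _ hxq.ne']
  rw [map_add, map_smul, map_sub, smul_eq_mul, add_sub_cancel_left] at hw
  calc m * ‖x - q‖ ≤ r / ‖x - q‖ * (f x - f q) * ‖x - q‖ :=
        mul_le_mul_of_nonneg_right hw hxq.le
    _ = r * (f x - f q) := by field_simp

theorem infDist_frontier_le_dist_of_mem_of_notMem {s : Set E} {x y : E} (hx : x ∈ s)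
    (hy : y ∉ s) : infDist x (frontier s) ≤ dist x y := by
  obtain ⟨z, hz, hzs⟩ : ∃ z ∈ segment ℝ x y, z ∈ frontier s := by
    by_contra! hnone
    have hsub : segment ℝ x y ⊆ interior s ∪ (closure s)ᶜ := fun z hz => by
      by_cases hzc : z ∈ closure s
      · exact Or.inl (not_not.1 fun hzi => hnone z hz ⟨hzc, hzi⟩)
      · exact Or.inr hzc
    have hxint : x ∈ interior s :=
      (hsub (left_mem_segment ℝ x y)).resolve_right (not_not.2 (subset_closure hx))
    exact hy <| interior_subset <| (convex_segment x y).isPreconnected.subset_left_of_subset_union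
      isOpen_interior isClosed_closure.isOpen_compl
      (disjoint_compl_right.mono_left interior_subset_closure) hsub
      ⟨x, left_mem_segment ℝ x y, hxint⟩ (right_mem_segment ℝ x y)
  calc infDist x (frontier s) ≤ dist x z := infDist_le_dist_of_mem hzs
    _ ≤ dist x y := by linarith [dist_add_dist_of_mem_segment hz, dist_nonneg (x := z) (y := y)]

def SlabsShrinkTo (A : Set E) (f : E →L[ℝ] ℝ) (c : E) : Prop :=
  ∀ ε > 0, ∃ θ > 0, ∀ x ∈ A, f c - θ < f x → ‖x - c‖ < ε

/-- A point `x` of the slab has its midpoint with `c` within `O(θ)` of `frontier A`, since moving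
up from it along a direction `e` with `f e = 1` leaves `A`. -/
theorem IsLURPoint.slabsShrinkTo {A : Set E} {c : E} (hLUR : IsLURPoint A c) (hAv : Convex ℝ A)
    (hc : c ∈ A) {f : E →L[ℝ] ℝ} (hf : f ≠ 0) (hA : ∀ x ∈ A, f x ≤ f c) :
    SlabsShrinkTo A f c := by
  intro ε hε
  obtain ⟨δ, hδ, hlur⟩ := hLUR ε hε
  obtain ⟨v, hv⟩ : ∃ v, f v ≠ 0 := by
    by_contra! h0
    exact hf (ContinuousLinearMap.ext h0)
  set e := (f v)⁻¹ • v
  have he : f e = 1 := by rw [map_smul, smul_eq_mul, inv_mul_cancel₀ hv]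
  refine ⟨δ / (2 * ‖e‖ + 1), by positivity, fun x hx hfx => ?_⟩
  set θ := δ / (2 * ‖e‖ + 1)
  have hθ : θ * (2 * ‖e‖ + 1) = δ := div_mul_cancel₀ _ (by positivity)
  set m := (2 : ℝ)⁻¹ • (c + x)
  have hm : m ∈ A := by
    simpa only [m, smul_add] using hAv hc hx (by norm_num) (by norm_num) (by norm_num)
  have hfm : f m = (f c + f x) / 2 := by
    simp only [m, map_smul, map_add, smul_eq_mul]; ring
  set t := f c - f m + θ
  have hout : m + t • e ∉ A := fun hmem => by
    have := hA _ hmem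
    rw [map_add, map_smul f t e, he, smul_eq_mul, mul_one] at this
    linarith [show 0 < θ by positivity]
  have hdist : dist m (m + t • e) < δ := by
    rw [dist_eq_norm, sub_add_cancel_left, norm_neg, norm_smul,
      Real.norm_of_nonneg (by linarith [hA x hx])]
    nlinarith [norm_nonneg e, show 0 < θ by positivity]
  rw [norm_sub_rev]
  exact hlur x hx ((infDist_frontier_le_dist_of_mem_of_notMem hm hout).trans_lt hdist)

theorem exists_supporting_functional {A B : Set E} (hAv : Convex ℝ A)
    (hAint : (interior A).Nonempty) (hBv : Convex ℝ B) (hdisj : Disjoint (interior A) B) {c : E}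
    (hcA : c ∈ A) (hcB : c ∈ B) :
    ∃ f : E →L[ℝ] ℝ, f ≠ 0 ∧ ‖f‖ ≤ 1 ∧ (∀ x ∈ A, f x ≤ f c) ∧ ∀ y ∈ B, f c ≤ f y := by
  obtain ⟨g, u, hgA, hgB⟩ := geometric_hahn_banach_open hAv.interior isOpen_interior hBv hdisj
  have hgA' : ∀ x ∈ A, g x ≤ u := fun x hx =>
    closure_minimal (fun z hz => (hgA z hz).le) (isClosed_le g.continuous continuous_const)
      ((hAv.closure_interior_eq_closure_of_nonempty_interior hAint).symm ▸ subset_closure hx)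
  have hgc : g c = u := le_antisymm (hgA' c hcA) (hgB c hcB)
  have hg0 : g ≠ 0 := by
    rintro rfl
    obtain ⟨z, hz⟩ := hAint
    have h1 := hgA z hz
    have h2 := hgB c hcB
    simp only [zero_apply] at h1 h2
    linarith
  have hpos : 0 < ‖g‖⁻¹ := inv_pos.2 (norm_pos_iff.2 hg0)
  refine ⟨‖g‖⁻¹ • g, smul_ne_zero hpos.ne' hg0, (norm_smul_inv_norm hg0).le, fun x hx => ?_,
    fun y hy => ?_⟩
  · simp only [smul_apply, smul_eq_mul]
    exact mul_le_mul_of_nonneg_left (hgc ▸ hgA' x hx) hpos.le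
  · simp only [smul_apply, smul_eq_mul]
    exact mul_le_mul_of_nonneg_left (hgc ▸ hgB y hy) hpos.le

theorem Convex.interior_inter_interior_nonempty {A B : Set E} (hBv : Convex ℝ B)
    (hBint : (interior B).Nonempty) (h : (B ∩ interior A).Nonempty) :
    (interior A ∩ interior B).Nonempty := by
  obtain ⟨c, hcB, hcA⟩ := h
  have hc : c ∈ closure (interior B) :=
    (hBv.closure_interior_eq_closure_of_nonempty_interior hBint).symm ▸ subset_closure hcB
  exact mem_closure_iff.1 hc _ isOpen_interior hcA

end Geometry

section Slabs

variable {E : Type*} [NormedAddCommGroup E] [NormedSpace ℝ E] {f : E →L[ℝ] ℝ} {c : E}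

theorem AWTendsto.exists_eventually_mul_norm_sub_le {An : ℕ → Set E} {A : Set E}
    (hAW : AWTendsto An A) (hne : ∀ n, (An n).Nonempty) (hconv : ∀ n, Convex ℝ (An n))
    (hf : ‖f‖ ≤ 1) (hcA : c ∈ A)
    (hslab : SlabsShrinkTo A f c) {ε : ℝ} (hε : 0 < ε) :
    ∃ μ > 0, ∀ᶠ n in atTop, ∀ x ∈ An n, ε ≤ ‖x - c‖ → μ * ‖x - c‖ ≤ f c - f x := by
  obtain ⟨θ₀, hθ₀, hθ₀A⟩ := hslab (ε / 4) (by positivity)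
  set θ := min θ₀ ε
  have hθ : 0 < θ := lt_min hθ₀ hε
  set ζ := min (θ / 4) (ε / 8)
  have hζ : 0 < ζ := by positivity
  have hζθ : ζ ≤ θ / 4 := min_le_left _ _
  have hζε : ζ ≤ ε / 8 := min_le_right _ _
  have hθε : θ ≤ ε := min_le_right _ _
  refine ⟨θ / (2 * ε), by positivity, ?_⟩
  filter_upwards [hAW.eventually_exists_mem_near_of_mem hne hcA hζ,
    hAW.eventually_exists_mem_limit_near ⟨c, hcA⟩ (‖c‖ + ε) hζ] with n ⟨q, hq, hqc⟩ hnear x hx hxc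
  have hfq := ContinuousLinearMap.sub_le_norm_sub_of_opNorm_le_one hf
  -- on the sphere of radius `ε/2` around `q`, points of `An n` are near far points of `A`,
  -- which lie at depth at least `θ₀` under the hyperplane
  have hsphere : ∀ w ∈ An n, ‖w - q‖ = ε / 2 → θ / 2 ≤ (-f) w - (-f) q := by
    intro w hw hwq
    have hwR : ‖w‖ ≤ ‖c‖ + ε := by
      linarith [norm_le_norm_add_norm_sub' w c, norm_sub_le_norm_sub_add_norm_sub w q c]
    obtain ⟨x', hx', hwx'⟩ := hnear w hw hwR
    have hfar : ε / 4 ≤ ‖x' - c‖ := by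
      linarith [norm_sub_le_norm_sub_add_norm_sub w x' q,
        norm_sub_le_norm_sub_add_norm_sub x' c q, norm_sub_rev c q]
    have hdeep : f x' ≤ f c - θ₀ := not_lt.1 fun h => (hθ₀A x' hx' h).not_ge hfar
    simp only [neg_apply]
    linarith [hfq w x', hfq c q, norm_sub_rev c q, min_le_left θ₀ ε]
  have hcone := (hconv n).mul_norm_sub_le_of_forall_norm_sub_eq hq (-f) (by positivity) hsphere hx
    (by linarith [norm_sub_le_norm_sub_add_norm_sub x q c])
  simp only [neg_apply] at hcone
  rw [div_mul_eq_mul_div, div_le_iff₀ (by positivity)]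
  nlinarith [norm_sub_le_norm_sub_add_norm_sub x q c, hfq q c, mul_le_mul_of_nonneg_left
    (norm_sub_le_norm_sub_add_norm_sub x q c) hθ.le]

theorem AWTendsto.eventually_sub_le_mul {Bn : ℕ → Set E} {B : Set E} (hBW : AWTendsto Bn B)
    (hne : ∀ n, (Bn n).Nonempty) (hconv : ∀ n, Convex ℝ (Bn n)) (hf : ‖f‖ ≤ 1) (hcB : c ∈ B)
    (hB : ∀ y ∈ B, f c ≤ f y) {η : ℝ} (hη : 0 < η) :
    ∀ᶠ n in atTop, ∀ y ∈ Bn n, f c - f y ≤ η * (1 + ‖y - c‖) := by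
  set ζ := min (η / 3) 1
  have hζ : 0 < ζ := by positivity
  have hζη : ζ ≤ η / 3 := min_le_left _ _
  have hζ1 : ζ ≤ 1 := min_le_right _ _
  filter_upwards [hBW.eventually_exists_mem_near_of_mem hne hcB hζ,
    hBW.eventually_exists_mem_limit_near ⟨c, hcB⟩ (‖c‖ + 2) hζ] with n ⟨q, hq, hqc⟩ hnear y hy
  have hfq := ContinuousLinearMap.sub_le_norm_sub_of_opNorm_le_one hf
  have hball : ∀ w ∈ Bn n, ‖w - q‖ ≤ 1 → f c - f w ≤ ζ := by
    intro w hw hwq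
    obtain ⟨y', hy', hwy'⟩ := hnear w hw <| by
      linarith [norm_le_norm_add_norm_sub' w c, norm_sub_le_norm_sub_add_norm_sub w q c]
    linarith [hB y' hy', hfq y' w, norm_sub_rev y' w]
  rcases lt_or_ge ‖y - q‖ 1 with hyq | hyq
  · nlinarith [hball y hy hyq.le, norm_nonneg (y - c)]
  · have hcone := (hconv n).mul_norm_sub_le_of_forall_norm_sub_eq hq f one_pos (m := -(2 * ζ))
      (fun w hw hwq => by linarith [hball w hw hwq.le, hfq q c]) hy hyq
    nlinarith [norm_sub_le_norm_sub_add_norm_sub y c q, norm_sub_rev c q, hfq c q,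
      norm_nonneg (y - c)]

theorem exists_eventually_mul_norm_sub_le_norm_sub {A B : Set E} {An Bn : ℕ → Set E}
    (hAW : AWTendsto An A) (hAne : ∀ n, (An n).Nonempty) (hAconv : ∀ n, Convex ℝ (An n))
    (hBW : AWTendsto Bn B) (hBne : ∀ n, (Bn n).Nonempty) (hBconv : ∀ n, Convex ℝ (Bn n))
    (hf : ‖f‖ ≤ 1) (hcA : c ∈ A) (hcB : c ∈ B) (hB : ∀ y ∈ B, f c ≤ f y)
    (hslab : SlabsShrinkTo A f c) {ε : ℝ} (hε : 0 < ε)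
    (hε1 : ε ≤ 1) :
    ∃ l > 0, ∀ᶠ n in atTop, ∀ x ∈ An n, ε ≤ ‖x - c‖ → ∀ y ∈ Bn (n + 1),
      l * ‖x - c‖ ≤ ‖x - y‖ := by
  obtain ⟨μ, hμ, hdepth⟩ := hAW.exists_eventually_mul_norm_sub_le hAne hAconv hf hcA hslab hε
  set η := min (μ * ε / 4) 1
  have hη : 0 < η := by positivity
  have hημ : η ≤ μ * ε / 4 := min_le_left _ _
  have hη1 : η ≤ 1 := min_le_right _ _
  refine ⟨μ / 4, by positivity, ?_⟩
  filter_upwards [hdepth, (tendsto_add_atTop_nat 1).eventually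
    (hBW.eventually_sub_le_mul hBne hBconv hf hcB hB hη)] with n hx hy x hxA hxc y hyB
  have hdx := hx x hxA hxc
  have hdy := hy y hyB
  have hlip := ContinuousLinearMap.sub_le_norm_sub_of_opNorm_le_one hf y x
  have hyc := norm_sub_le_norm_sub_add_norm_sub y x c
  rw [norm_sub_rev y x] at hlip hyc
  nlinarith [mul_le_mul_of_nonneg_left hε1 hμ.le, norm_nonneg (x - y)]

end Slabs

section SlabCase

variable {X : Type*} [NormedAddCommGroup X] [InnerProductSpace ℝ X] {f : X →L[ℝ] ℝ} {c a₀ : X}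
  {A B : Set X} {An Bn : ℕ → Set X} {a b : ℕ → X}

theorem IsPerturbedAPS.eventually_norm_sub_le_of_slabsShrinkTo (hab : IsPerturbedAPS An Bn a₀ a b)
    (hAW : AWTendsto An A) (hAne : ∀ n, (An n).Nonempty) (hAconv : ∀ n, Convex ℝ (An n))
    (hBW : AWTendsto Bn B) (hBne : ∀ n, (Bn n).Nonempty) (hBconv : ∀ n, Convex ℝ (Bn n))
    (hf : ‖f‖ ≤ 1) (hcA : c ∈ A) (hcB : c ∈ B) (hB : ∀ y ∈ B, f c ≤ f y)
    (hslab : SlabsShrinkTo A f c) {ε : ℝ} (hε : 0 < ε) (hε1 : ε ≤ 1) :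
    ∀ᶠ n in atTop, ‖a (n + 1) - c‖ ≤ 2 * ε ∧ ‖b (n + 2) - c‖ ≤ 3 * ε := by
  obtain ⟨l, hl, hsep⟩ := exists_eventually_mul_norm_sub_le_norm_sub hAW hAne hAconv hBW hBne
    hBconv hf hcA hcB hB hslab hε hε1
  set ζ := min (ε / 4) (l ^ 2 * ε / 32)
  have hζ : 0 < ζ := by positivity
  have hζε : ζ ≤ ε / 4 := min_le_left _ _
  have hζl : ζ ≤ l ^ 2 * ε / 32 := min_le_right _ _
  have hstep : ∀ᶠ n in atTop, ‖b (n + 2) - c‖ ≤ ‖a (n + 1) - c‖ + 2 * ζ ∧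
      ‖a (n + 2) - c‖ ≤ ‖a (n + 1) - c‖ + 4 * ζ ∧
      (ε ≤ ‖a (n + 1) - c‖ → ‖a (n + 2) - c‖ ≤ (1 - l ^ 2 / 4) * ‖a (n + 1) - c‖ + 4 * ζ) := by
    filter_upwards [(tendsto_add_atTop_nat 2).eventually
        ((hAW.eventually_exists_mem_near_of_mem hAne hcA hζ).and
          (hBW.eventually_exists_mem_near_of_mem hBne hcB hζ)),
      (tendsto_add_atTop_nat 1).eventually hsep] with n ⟨⟨qA, hqA, hqAc⟩, ⟨qB, hqB, hqBc⟩⟩ hsepn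
    obtain ⟨hb, ha⟩ := hab.2 (n + 1)
    have hbc := hb.norm_sub_le_add (hBconv _) hqB c
    have hac := ha.norm_sub_le_add (hAconv _) hqA c
    refine ⟨by linarith, by linarith, fun hεr => ?_⟩
    have hdesc := hb.norm_sub_le_of_mul_le (hBconv _) hqB hl.le
      (by linarith) (hsepn _ (hab.2 n).2.1 hεr _ hb.1)
    linarith
  filter_upwards [eventually_le_add_of_contracting (r := fun n => ‖a (n + 1) - c‖)
    (fun n => norm_nonneg _) (by positivity) (by positivity) (by nlinarith)
    (hstep.mono fun n h => h.2), hstep] with n hn hstepn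
  exact ⟨by linarith, by linarith [hstepn.1]⟩

theorem IsPerturbedAPS.tendsto_of_slabsShrinkTo (hab : IsPerturbedAPS An Bn a₀ a b)
    (hAW : AWTendsto An A) (hAne : ∀ n, (An n).Nonempty) (hAconv : ∀ n, Convex ℝ (An n))
    (hBW : AWTendsto Bn B) (hBne : ∀ n, (Bn n).Nonempty) (hBconv : ∀ n, Convex ℝ (Bn n))
    (hf : ‖f‖ ≤ 1) (hcA : c ∈ A) (hcB : c ∈ B) (hB : ∀ y ∈ B, f c ≤ f y)
    (hslab : SlabsShrinkTo A f c) :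
    Tendsto a atTop (𝓝 c) ∧ Tendsto b atTop (𝓝 c) := by
  have hsmall : ∀ ε > 0, ∀ᶠ n in atTop, ‖a (n + 1) - c‖ < ε ∧ ‖b (n + 2) - c‖ < ε := by
    intro ε hε
    filter_upwards [hab.eventually_norm_sub_le_of_slabsShrinkTo hAW hAne hAconv hBW hBne hBconv hf
      hcA hcB hB hslab (ε := min 1 (ε / 4)) (by positivity) (min_le_left _ _)] with n hn
    constructor <;> linarith [min_le_right 1 (ε / 4)]
  refine ⟨(tendsto_add_atTop_iff_nat 1).1 (Metric.tendsto_nhds.2 fun ε hε => ?_),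
    (tendsto_add_atTop_iff_nat 2).1 (Metric.tendsto_nhds.2 fun ε hε => ?_)⟩
  · filter_upwards [hsmall ε hε] with n hn using (dist_eq_norm _ _).trans_lt hn.1
  · filter_upwards [hsmall ε hε] with n hn using (dist_eq_norm _ _).trans_lt hn.2

end SlabCase

theorem stmt4_general {X : Type*} [NormedAddCommGroup X] [InnerProductSpace ℝ X] [CompleteSpace X]
    (A B : Set X)
    (hAv : Convex ℝ A) (hAint : (interior A).Nonempty)
    (hBv : Convex ℝ B) (hBint : (interior B).Nonempty)
    (hAB : (A ∩ B).Nonempty)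
    (hLUR : ∀ x ∈ frontier A, IsLURPoint A x) :
    StablePair A B := by
  intro An Bn hAn hBn hAW hBW a₀ a b hab
  by_cases hBA : (B ∩ interior A).Nonempty
  · obtain ⟨l, hla, hlb⟩ := hab.exists_tendsto_of_interior_inter_nonempty hAn hBn hAW hBW
      (hBv.interior_inter_interior_nonempty hBint hBA)
    exact ⟨⟨l, hla⟩, ⟨l, hlb⟩⟩
  · obtain ⟨c, hcA, hcB⟩ := hAB
    obtain ⟨f, hf0, hf1, hA, hB⟩ := exists_supporting_functional hAv hAint hBv
      (Set.disjoint_right.2 fun y hyB hyA => hBA ⟨y, hyB, hyA⟩) hcA hcB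
    have hcfr : c ∈ frontier A := ⟨subset_closure hcA, fun hc => hBA ⟨c, hcB, hc⟩⟩
    obtain ⟨ha, hb⟩ := hab.tendsto_of_slabsShrinkTo hAW (fun n => (hAn n).1)
      (fun n => (hAn n).2.2) hBW (fun n => (hBn n).1) (fun n => (hBn n).2.2) hf1 hcA hcB hB
      ((hLUR c hcfr).slabsShrinkTo hAv hcA hf0 hA)
    exact ⟨⟨c, ha⟩, ⟨c, hb⟩⟩

theorem stmt4 {X : Type*} [NormedAddCommGroup X] [InnerProductSpace ℝ X] [CompleteSpace X]
    (A B : Set X)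
    (hAc : IsClosed A) (hAv : Convex ℝ A) (hAint : (interior A).Nonempty)
    (hBc : IsClosed B) (hBv : Convex ℝ B) (hBint : (interior B).Nonempty)
    (hAB : (A ∩ B).Nonempty)
    (hLUR : ∀ x ∈ frontier A, IsLURPoint A x) :
    StablePair A B :=
  stmt4_general A B hAv hAint hBv hBint hAB hLUR
end
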